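/- Let μ, ν be shift-invariant Borel probability measures on Ω such that H_{Λ_n}(μ|ν) < ∞ for all n and lim_{n→∞} H_{Λ_n}(μ|ν)/n = 0. Then for every δ > 0 and every n_1 ≥ 1 there exists n_2 > n_1 such that H_{Λ_{n_2}}(μ|ν) − H_{Λ_{n_2} ∖ Λ_{n_1}}(μ|ν) ≤ δ, where Λ_{n_2} ∖ Λ_{n_1} = {n_1+1, …, n_2}. -/

import Mathlib

/-!
If the claim failed for some `n₁`, then, since shift invariance turns `H_{Λ_{n₁+m} ∖ Λ_{n₁}}`
into `H_{Λ_m}`, we would have `H_{Λ_{n₁+m}} > H_{Λ_m} + δ` for every `m ≥ 1`. Iterating along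
multiples of `n₁` gives `H_{Λ_{(k+1)n₁}} ≥ H_{Λ_{n₁}} + kδ`, so `H_{Λ_n}/n` would have the limit
point `δ/n₁ > 0` along `n = (k+1)n₁`.
-/

open MeasureTheory Filter
open scoped Classical

noncomputable section

namespace Paper

variable {A : Type*} [MetricSpace A] [CompactSpace A] [MeasurableSpace A] [BorelSpace A]

/-- The left shift `σ` on `Ω = Aᴺ`. -/
def shift (x : ℕ → A) : ℕ → A := fun n => x (n + 1)

/-- Prepend a symbol: `cons a x = (a, x₀, x₁, …)`. -/
def cons (a : A) (x : ℕ → A) : ℕ → A := fun n =>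
  match n with
  | 0 => a
  | n + 1 => x n

/-- The metric `d_Ω` on `Ω`. -/
def dOmega (x y : ℕ → A) : ℝ :=
  ∑' n : ℕ, (1 / 2 : ℝ) ^ (n + 1) * (dist (x n) (y n) / (1 + dist (x n) (y n)))

/-- `f` is `α`-Hölder with respect to `d_Ω`. -/
def IsHolder (α : ℝ) (f : (ℕ → A) → ℝ) : Prop :=
  ∃ C : ℝ, 0 ≤ C ∧ ∀ x y, |f x - f y| ≤ C * dOmega x y ^ α

/-- The Ruelle transfer operator with a priori measure `p`. -/
def ruelle (p : Measure A) (f φ : (ℕ → A) → ℝ) : (ℕ → A) → ℝ :=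
  fun x => ∫ a, Real.exp (f (cons a x)) * φ (cons a x) ∂p

/-- The normalized potential `f̄ = f + log h - log (h ∘ σ) - log λ`. -/
def fbar (f h : (ℕ → A) → ℝ) (lam : ℝ) : (ℕ → A) → ℝ :=
  fun x => f x + Real.log (h x) - Real.log (h (shift x)) - Real.log lam

/-- Projection on the first `n` coordinates. -/
def proj (n : ℕ) (x : ℕ → A) : Fin n → A := fun i => x i

/-- Relative entropy `H(μ|ν)` of two measures, with value `+∞` unless
`μ ≪ ν` and the entropy integral is finite. -/
def relEnt {X : Type*} [MeasurableSpace X] (μ ν : Measure X) : EReal :=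
  if μ ≪ ν ∧ Integrable (fun x => Real.log (μ.rnDeriv ν x).toReal) μ then
    ((∫ x, Real.log (μ.rnDeriv ν x).toReal ∂μ : ℝ) : EReal)
  else ⊤

/-- Relative entropy `H_{Λ_n}(μ|ν)` on the σ-algebra of the first `n` coordinates. -/
def relEntN (n : ℕ) (μ ν : Measure (ℕ → A)) : EReal :=
  relEnt (μ.map (proj n)) (ν.map (proj n))

/-- The entropy `H_{Λ_n}(μ) = -H_{Λ_n}(μ | pᴺ)` relative to the a priori measure `p`. -/
def finEnt (p : Measure A) (μ : Measure (ℕ → A)) (n : ℕ) : EReal :=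
  - relEnt (μ.map (proj n)) (Measure.pi fun _ : Fin n => p)

/-- The specific entropy `h^s(μ) = lim_n H_{Λ_n}(μ)/n` (defined as a `limsup`,
which coincides with the limit whenever the latter exists). -/
def specEnt (p : Measure A) (μ : Measure (ℕ → A)) : EReal :=
  Filter.atTop.limsup fun n : ℕ => ((n : ℝ)⁻¹ : EReal) * finEnt p μ n

/-- Birkhoff sum `S_n(f)`. -/
def birkhoff (n : ℕ) (f : (ℕ → A) → ℝ) (x : ℕ → A) : ℝ :=
  ∑ i ∈ Finset.range n, f (shift^[i] x)

/-- The configuration `x_{Λ_n} y_{Λ_n^c}`. -/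
def concatAt (n : ℕ) (x y : ℕ → A) : ℕ → A := fun i => if i < n then x i else y i

/-- Concatenation of a finite word with a configuration. -/
def wordCons (n : ℕ) (a : Fin n → A) (x : ℕ → A) : ℕ → A :=
  fun i => if h : i < n then a ⟨i, h⟩ else x (i - n)

/-- Projection on the coordinates in a finite set `Λ ⊂ ℕ`. -/
def projSet (Λ : Finset ℕ) (x : ℕ → A) : Λ → A := fun i => x i

/-- Relative entropy `H_Λ(μ|ν)` on the σ-algebra `F_Λ` generated by the coordinates in
the finite set `Λ`. -/
def relEntOn (Λ : Finset ℕ) (μ ν : Measure (ℕ → A)) : EReal :=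
  relEnt (μ.map (projSet Λ)) (ν.map (projSet Λ))

section RelEnt

variable {X Y : Type*} [MeasurableSpace X] [MeasurableSpace Y]

lemma relEnt_ne_bot (μ ν : Measure X) : relEnt μ ν ≠ ⊥ := by
  unfold relEnt; split_ifs <;> simp

lemma map_absolutelyContinuous_map_iff {μ ν : Measure X} (e : X ≃ᵐ Y) :
    μ.map e ≪ ν.map e ↔ μ ≪ ν := by
  refine ⟨fun h => ?_, fun h => h.map e.measurable⟩
  simpa [Measure.map_map e.symm.measurable e.measurable] using h.map e.symm.measurable

theorem relEnt_map_measurableEquiv (μ ν : Measure X) [SigmaFinite μ] [SigmaFinite ν]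
    (e : X ≃ᵐ Y) : relEnt (μ.map e) (ν.map e) = relEnt μ ν := by
  by_cases hμν : μ ≪ ν
  · have hlog : (fun x => Real.log ((μ.map e).rnDeriv (ν.map e) (e x)).toReal)
        =ᵐ[μ] fun x => Real.log (μ.rnDeriv ν x).toReal :=
      hμν.ae_le ((e.measurableEmbedding.rnDeriv_map μ ν).fun_comp fun t => Real.log t.toReal)
    simp only [relEnt, integrable_map_equiv, integral_map_equiv, Function.comp_def,
      integrable_congr hlog, integral_congr_ae hlog, map_absolutelyContinuous_map_iff e]
  · simp [relEnt, map_absolutelyContinuous_map_iff e, hμν]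

end RelEnt

section Shift

omit [MetricSpace A] [CompactSpace A] [BorelSpace A]

lemma measurable_shift : Measurable (shift (A := A)) :=
  measurable_pi_lambda _ fun _ => measurable_pi_apply _

lemma measurable_projSet (Λ : Finset ℕ) : Measurable (projSet (A := A) Λ) :=
  measurable_pi_lambda _ fun _ => measurable_pi_apply _

omit [MeasurableSpace A] in
lemma shift_iterate_apply (k : ℕ) (x : ℕ → A) (n : ℕ) : shift^[k] x n = x (n + k) := by
  induction k generalizing x with
  | zero => rfl
  | succ k ih => rw [Function.iterate_succ_apply, ih]; rfl

def rangeEquivIco (k m : ℕ) : Finset.range m ≃ Finset.Ico k (k + m) where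
  toFun i := ⟨k + i, by have := Finset.mem_range.mp i.2; simp; omega⟩
  invFun j := ⟨j - k, by have := Finset.mem_Ico.mp j.2; simp; omega⟩
  left_inv i := Subtype.ext (Nat.add_sub_cancel_left ..)
  right_inv j := Subtype.ext (Nat.add_sub_of_le (Finset.mem_Ico.mp j.2).1)

lemma projSet_Ico_eq (k m : ℕ) :
    projSet (A := A) (Finset.Ico k (k + m)) =
      MeasurableEquiv.piCongrLeft (fun _ => A) (rangeEquivIco k m) ∘
        projSet (Finset.range m) ∘ shift^[k] := by
  funext x j
  obtain ⟨i, rfl⟩ := (rangeEquivIco k m).surjective j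
  rw [Function.comp_apply, Function.comp_apply, MeasurableEquiv.piCongrLeft_apply_apply]
  simp [projSet, rangeEquivIco, shift_iterate_apply, Nat.add_comm]

lemma relEntOn_Ico_add_eq_relEntOn_range {μ ν : Measure (ℕ → A)} [IsFiniteMeasure μ]
    [IsFiniteMeasure ν] (hμ : μ.map shift = μ) (hν : ν.map shift = ν) (k m : ℕ) :
    relEntOn (Finset.Ico k (k + m)) μ ν = relEntOn (Finset.range m) μ ν := by
  have hmap : ∀ κ : Measure (ℕ → A), κ.map shift = κ →
      κ.map (projSet (Finset.Ico k (k + m))) =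
        (κ.map (projSet (Finset.range m))).map
          (MeasurableEquiv.piCongrLeft (fun _ => A) (rangeEquivIco k m)) := by
    intro κ hκ
    rw [projSet_Ico_eq, ← Measure.map_map (MeasurableEquiv.measurable _)
      ((measurable_projSet _).comp (measurable_shift.iterate k)),
      ← Measure.map_map (measurable_projSet _) (measurable_shift.iterate k),
      ((MeasurePreserving.mk measurable_shift hκ).iterate k).map_eq]
  rw [relEntOn, relEntOn, hmap μ hμ, hmap ν hν, relEnt_map_measurableEquiv]

end Shift

lemma exists_le_add_of_tendsto_inv_mul_zero {r : ℕ → ℝ}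
    (hr : Tendsto (fun n : ℕ => (n : ℝ)⁻¹ * r n) atTop (nhds 0)) {δ : ℝ} (hδ : 0 < δ) {N : ℕ}
    (hN : 0 < N) : ∃ m, 0 < m ∧ r (N + m) ≤ r m + δ := by
  by_contra! hgrow
  have hlin : ∀ k : ℕ, r N + δ * k ≤ r (N + N * k) := by
    intro k
    induction k with
    | zero => simp
    | succ k ih =>
      have := hgrow (N + N * k) (by positivity)
      rw [show N + N * (k + 1) = N + (N + N * k) by ring]
      push_cast
      linarith
  have hsubseq : Tendsto (fun k : ℕ => ((N + N * k : ℕ) : ℝ)⁻¹ * r (N + N * k)) atTop (nhds 0) :=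
    hr.comp (tendsto_atTop_mono (fun k => le_add_left (Nat.le_mul_of_pos_left k hN)) tendsto_id)
  have hlower : Tendsto (fun k : ℕ => (r N + δ * k) / (N + N * k)) atTop (nhds (δ / N)) :=
    tendsto_add_mul_div_add_mul_atTop_nhds _ _ _ (by positivity)
  have hδN : δ / N ≤ 0 := le_of_tendsto_of_tendsto' hlower hsubseq fun k => by
    rw [div_eq_inv_mul]
    push_cast
    exact mul_le_mul_of_nonneg_left (hlin k) (by positivity)
  exact hδN.not_gt (by positivity)

/-- Let `μ, ν` be shift-invariant Borel probability measures with
`H_{Λ_n}(μ|ν) < ∞` for all `n` and `lim_n H_{Λ_n}(μ|ν)/n = 0`. Then for every `δ > 0`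
and every `n₁ ≥ 1` there is `n₂ > n₁` with
`H_{Λ_{n₂}}(μ|ν) - H_{Λ_{n₂}∖Λ_{n₁}}(μ|ν) ≤ δ`. -/
theorem statement14
    (μ ν : Measure (ℕ → A)) [IsProbabilityMeasure μ] [IsProbabilityMeasure ν]
    (hμ : μ.map shift = μ) (hν : ν.map shift = ν)
    (hfin : ∀ n : ℕ, relEntOn (Finset.range n) μ ν ≠ ⊤)
    (hlim : Tendsto (fun n : ℕ => ((n : ℝ)⁻¹ : EReal) * relEntOn (Finset.range n) μ ν)
      atTop (nhds 0))
    (δ : ℝ) (hδ : 0 < δ) (n₁ : ℕ) (hn₁ : 1 ≤ n₁) :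
    ∃ n₂ : ℕ, n₁ < n₂ ∧
      relEntOn (Finset.range n₂) μ ν
        ≤ relEntOn (Finset.Ico n₁ n₂) μ ν + ((δ : ℝ) : EReal) := by
  set r : ℕ → ℝ := fun n => (relEntOn (Finset.range n) μ ν).toReal
  have hr : ∀ n, relEntOn (Finset.range n) μ ν = r n := fun n =>
    (EReal.coe_toReal (hfin n) (relEnt_ne_bot _ _)).symm
  have hrlim : Tendsto (fun n : ℕ => (n : ℝ)⁻¹ * r n) atTop (nhds 0) := by
    simp_rw [hr, ← EReal.coe_inv, ← EReal.coe_mul, ← EReal.coe_zero, EReal.tendsto_coe] at hlim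
    exact hlim
  obtain ⟨m, hm, hle⟩ := exists_le_add_of_tendsto_inv_mul_zero hrlim hδ hn₁
  refine ⟨n₁ + m, by omega, ?_⟩
  rw [relEntOn_Ico_add_eq_relEntOn_range hμ hν, hr, hr, ← EReal.coe_add]
  exact_mod_cast hle

end Paper
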